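/- arXiv:1202.1496 — 2 statements merged into one kernel-verified Lean document; each statement's English description precedes it below -/
import Mathlib

section
/- Let {(ρᵢ, Wᵢ)}_{i∈I} be a nonempty family of soft Γ-semirings over S such that for all i, j ∈ I and every parameter y, either ρᵢ(y) ⊆ ρⱼ(y) or ρⱼ(y) ⊆ ρᵢ(y) (the family is a chain pointwise). Then the restricted union (ψ, Y) with Y = ⋂ᵢ Wᵢ ≠ ∅ and ψ(y) = ⋃ᵢ ρᵢ(y) is a soft Γ-semiring over S, provided it is non-null. -/
structure GammaSemiring (S Γ : Type*) [AddCommSemigroup S] [AddCommSemigroup Γ] where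
  tmul : S → Γ → S → S
  add_left : ∀ (a b : S) (α : Γ) (c : S), tmul (a + b) α c = tmul a α c + tmul b α c
  add_right : ∀ (a : S) (α : Γ) (b c : S), tmul a α (b + c) = tmul a α b + tmul a α c
  gamma_add : ∀ (a : S) (α β : Γ) (b : S), tmul a (α + β) b = tmul a α b + tmul a β b
  assoc : ∀ (a : S) (α : Γ) (b : S) (β : Γ) (c : S),
    tmul a α (tmul b β c) = tmul (tmul a α b) β c

/-- `T` is a sub-Γ-semiring of `S`: nonempty, closed under `+` and the Γ-product. -/
def IsSubGS {S Γ : Type*} [AddCommSemigroup S] [AddCommSemigroup Γ]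
    (G : GammaSemiring S Γ) (T : Set S) : Prop :=
  T.Nonempty ∧ (∀ a ∈ T, ∀ b ∈ T, a + b ∈ T) ∧
    (∀ a ∈ T, ∀ b ∈ T, ∀ α : Γ, G.tmul a α b ∈ T)

/-- `(ρ, W)` is a soft Γ-semiring over `S`: non-null, and each nonempty value on `W`
is a sub-Γ-semiring of `S`. -/
def IsSoftGS {S Γ E : Type*} [AddCommSemigroup S] [AddCommSemigroup Γ]
    (G : GammaSemiring S Γ) (W : Set E) (ρ : E → Set S) : Prop :=
  (∃ w ∈ W, (ρ w).Nonempty) ∧ ∀ w ∈ W, (ρ w).Nonempty → IsSubGS G (ρ w)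

theorem stmt_7 {S Γ E I : Type*} [AddCommSemigroup S] [AddCommSemigroup Γ]
    [Nonempty I] (G : GammaSemiring S Γ) (W : I → Set E) (ρ : I → E → Set S)
    (hsoft : ∀ i, IsSoftGS G (W i) (ρ i))
    (hchain : ∀ i j : I, ∀ y : E, ρ i y ⊆ ρ j y ∨ ρ j y ⊆ ρ i y)
    (hY : (⋂ i, W i).Nonempty)
    (hnn : ∃ y ∈ ⋂ i, W i, (⋃ i, ρ i y).Nonempty) :
    IsSoftGS G (⋂ i, W i) (fun y => ⋃ i, ρ i y) := by
  constructor
  · exact hnn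
  · intro y hy hne
    have hyi : ∀ i, y ∈ W i := fun i => Set.mem_iInter.mp hy i
    have hsub : ∀ i, (ρ i y).Nonempty → IsSubGS G (ρ i y) :=
      fun i h => (hsoft i).2 y (hyi i) h
    refine ⟨hne, ?_, ?_⟩
    · rintro a ha b hb
      obtain ⟨_, ⟨i, rfl⟩, hai⟩ := ha
      obtain ⟨_, ⟨j, rfl⟩, hbj⟩ := hb
      rcases hchain i j y with h | h
      · exact Set.mem_iUnion.mpr ⟨j, (hsub j ⟨b, hbj⟩).2.1 a (h hai) b hbj⟩
      · exact Set.mem_iUnion.mpr ⟨i, (hsub i ⟨a, hai⟩).2.1 a hai b (h hbj)⟩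
    · rintro a ha b hb α
      obtain ⟨_, ⟨i, rfl⟩, hai⟩ := ha
      obtain ⟨_, ⟨j, rfl⟩, hbj⟩ := hb
      rcases hchain i j y with h | h
      · exact Set.mem_iUnion.mpr ⟨j, (hsub j ⟨b, hbj⟩).2.2 a (h hai) b hbj α⟩
      · exact Set.mem_iUnion.mpr ⟨i, (hsub i ⟨a, hai⟩).2.2 a hai b (h hbj) α⟩
end

section
/- Let {(ρᵢ, Wᵢ)}_{i∈I} be a nonempty family of soft Γ-semirings over S such that for all i,j ∈ I and all parameters, the values ρᵢ(yᵢ) are pairwise comparable under inclusion. Then the ∨-union (ψ, Πᵢ Wᵢ), defined by ψ((yᵢ)ᵢ) = ⋃ᵢ ρᵢ(yᵢ), is a soft Γ-semiring over S. -/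
theorem stmt_10 {S Γ I : Type*} {E : I → Type*} [AddCommSemigroup S]
    [AddCommSemigroup Γ] [Nonempty I] (G : GammaSemiring S Γ)
    (W : ∀ i, Set (E i)) (ρ : ∀ i, E i → Set S)
    (hsoft : ∀ i, IsSoftGS G (W i) (ρ i))
    (hchain : ∀ i j : I, ∀ (yi : E i) (yj : E j), ρ i yi ⊆ ρ j yj ∨ ρ j yj ⊆ ρ i yi) :
    IsSoftGS G (Set.univ.pi W) (fun y : ∀ i, E i => ⋃ i, ρ i (y i)) := by
  classical
  choose w hwW hwne using fun i => (hsoft i).1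
  constructor
  · exact ⟨w, fun i _ => hwW i, by
      obtain ⟨i⟩ := ‹Nonempty I›
      obtain ⟨s, hs⟩ := hwne i
      exact ⟨s, Set.mem_iUnion.2 ⟨i, hs⟩⟩⟩
  · intro y hy hne
    have hsub : ∀ i, (ρ i (y i)).Nonempty → IsSubGS G (ρ i (y i)) :=
      fun i h => (hsoft i).2 (y i) (hy i trivial) h
    refine ⟨hne, ?_, ?_⟩
    · intro a ha b hb
      obtain ⟨i, hai⟩ := Set.mem_iUnion.1 ha
      obtain ⟨j, hbj⟩ := Set.mem_iUnion.1 hb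
      rcases hchain i j (y i) (y j) with h | h
      · exact Set.mem_iUnion.2 ⟨j, (hsub j ⟨b, hbj⟩).2.1 a (h hai) b hbj⟩
      · exact Set.mem_iUnion.2 ⟨i, (hsub i ⟨a, hai⟩).2.1 a hai b (h hbj)⟩
    · intro a ha b hb α
      obtain ⟨i, hai⟩ := Set.mem_iUnion.1 ha
      obtain ⟨j, hbj⟩ := Set.mem_iUnion.1 hb
      rcases hchain i j (y i) (y j) with h | h
      · exact Set.mem_iUnion.2 ⟨j, (hsub j ⟨b, hbj⟩).2.2 a (h hai) b hbj α⟩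
      · exact Set.mem_iUnion.2 ⟨i, (hsub i ⟨a, hai⟩).2.2 a hai b (h hbj) α⟩
end
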